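/- arXiv:1410.5982 — 2 statements merged into one kernel-verified Lean document; each statement's English description precedes it below -/
import Mathlib

section
/- Second-order solvability condition: with x⁽¹⁾(t) = x̃⁽¹⁾ + ∑_{k∈𝒦} Ã_k sin(2x₀+(2ω₀−k)t) − but with x̃⁽¹⁾ chosen so the constant terms cancel, the average (1/(2πq)) ∫_0^{2πq} ∂ₓG(x₀+ω₀t, t)·[∑_{k∈𝒦} Ã_k sin(2x₀+(2ω₀−k)t)] dt equals sin(4x₀) · ∑_{k,k′∈𝒦, k+k′=4ω₀} A_{k′} Ã_k, where ∂ₓG(x,t) = ∑_{k∈𝒦} 2A_k cos(2x−kt) and Ã_k = A_k/(2ω₀−k)². -/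
/-!
By the product-to-sum formula each term of the integrand is a sum of two sines whose frequencies
lie in `ℤ / q`, so each averages over the common period `2πq` to its value at `t = 0` if its
frequency vanishes and to zero otherwise. The sum frequency vanishes exactly when `k + k' = 4ω₀`
and contributes `sin (4 x₀)`; the difference frequency contributes `sin 0 = 0`.
-/

open Real

theorem integral_sin_add_mul_of_mul_eq_int_mul_two_pi {T ω : ℝ} (φ : ℝ)
    (hω : ∃ n : ℤ, ω * T = n * (2 * π)) :
    ∫ t in (0:ℝ)..T, sin (φ + ω * t) = if ω = 0 then T * sin φ else 0 := by
  split_ifs with h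
  · simp [h]
  obtain ⟨n, hn⟩ := hω
  rw [intervalIntegral.integral_comp_add_mul _ h, integral_sin, hn, cos_add_int_mul_two_pi]
  simp

theorem integral_two_mul_sin_mul_cos {T a b : ℝ} (α β : ℝ)
    (hsum : ∃ n : ℤ, (a + b) * T = n * (2 * π)) (hdiff : ∃ n : ℤ, (b - a) * T = n * (2 * π)) :
    ∫ t in (0:ℝ)..T, 2 * sin (β + b * t) * cos (α + a * t) =
      (if b - a = 0 then T * sin (β - α) else 0) + (if a + b = 0 then T * sin (α + β) else 0) := by
  have h : ∀ t, 2 * sin (β + b * t) * cos (α + a * t) =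
      sin ((β - α) + (b - a) * t) + sin ((α + β) + (a + b) * t) := fun t => by
    rw [two_mul_sin_mul_cos]; ring_nf
  simp_rw [h]
  rw [intervalIntegral.integral_add (by apply Continuous.intervalIntegrable; fun_prop)
      (by apply Continuous.intervalIntegrable; fun_prop),
    integral_sin_add_mul_of_mul_eq_int_mul_two_pi _ hdiff,
    integral_sin_add_mul_of_mul_eq_int_mul_two_pi _ hsum]

theorem integral_two_mul_sin_mul_cos_rat_freq (x₀ : ℝ) (k k' p q : ℤ) (hq : (q : ℝ) ≠ 0) :
    ∫ t in (0:ℝ)..(2 * π * q),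
        2 * sin (2 * x₀ + (2 * ((p : ℝ) / q) - k) * t) *
          cos (2 * x₀ + (2 * ((p : ℝ) / q) - k') * t) =
      if (k : ℝ) + k' = 4 * ((p : ℝ) / q) then 2 * π * q * sin (4 * x₀) else 0 := by
  rw [integral_two_mul_sin_mul_cos]
  · have hfreq :
        2 * ((p : ℝ) / q) - k' + (2 * ((p : ℝ) / q) - k) = 0 ↔
          (k : ℝ) + k' = 4 * ((p : ℝ) / q) := by
      constructor <;> intro h <;> linarith
    simp only [sub_self, sin_zero, mul_zero, ite_self, zero_add, hfreq, ← two_mul]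
    ring_nf
  · exact ⟨4 * p - q * (k + k'), by push_cast; field_simp; ring⟩
  · exact ⟨q * (k' - k), by push_cast; field_simp; ring⟩

theorem average_two_mul_cos_sum_mul_sin_sum (𝒦 : Finset ℤ) (a c : ℤ → ℝ) (x₀ : ℝ) (p q : ℤ)
    (hq : (q : ℝ) ≠ 0) :
    1 / (2 * π * q) * ∫ t in (0:ℝ)..(2 * π * q),
        (∑ k ∈ 𝒦, 2 * a k * cos (2 * x₀ + (2 * ((p : ℝ) / q) - k) * t)) *
          (∑ k ∈ 𝒦, c k * sin (2 * x₀ + (2 * ((p : ℝ) / q) - k) * t)) =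
      sin (4 * x₀) * ∑ k ∈ 𝒦, ∑ k' ∈ 𝒦,
        if (k : ℝ) + k' = 4 * ((p : ℝ) / q) then a k' * c k else 0 := by
  have hintegrand (t : ℝ) :
      (∑ k ∈ 𝒦, 2 * a k * cos (2 * x₀ + (2 * ((p : ℝ) / q) - k) * t)) *
          (∑ k ∈ 𝒦, c k * sin (2 * x₀ + (2 * ((p : ℝ) / q) - k) * t)) =
        ∑ k ∈ 𝒦, ∑ k' ∈ 𝒦, c k * a k' * (2 * sin (2 * x₀ + (2 * ((p : ℝ) / q) - k) * t) *
          cos (2 * x₀ + (2 * ((p : ℝ) / q) - k') * t)) := by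
    rw [mul_comm, Finset.sum_mul_sum]
    exact Finset.sum_congr rfl fun k _ => Finset.sum_congr rfl fun k' _ => by ring
  simp_rw [hintegrand]
  rw [intervalIntegral.integral_finsetSum fun k _ => by
      apply Continuous.intervalIntegrable; fun_prop, Finset.mul_sum, Finset.mul_sum]
  refine Finset.sum_congr rfl fun k _ => ?_
  rw [intervalIntegral.integral_finsetSum fun k' _ => by
      apply Continuous.intervalIntegrable; fun_prop, Finset.mul_sum, Finset.mul_sum]
  refine Finset.sum_congr rfl fun k' _ => ?_
  rw [intervalIntegral.integral_const_mul, integral_two_mul_sin_mul_cos_rat_freq x₀ k k' p q hq]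
  split_ifs
  · field_simp
  · simp

theorem second_order_average_general (𝒦 : Finset ℤ) (A : ℤ → ℝ) (p q : ℤ) (hq : 1 ≤ q) (x₀ : ℝ) :
    (1 / (2 * π * q)) * ∫ t in (0:ℝ)..(2 * π * q),
        (∑ k ∈ 𝒦, 2 * A k * Real.cos (2 * (x₀ + ((p : ℝ) / (q : ℝ)) * t) - (k : ℝ) * t)) *
          (∑ k ∈ 𝒦, (A k / (2 * ((p : ℝ) / (q : ℝ)) - (k : ℝ)) ^ 2) *
            Real.sin (2 * x₀ + (2 * ((p : ℝ) / (q : ℝ)) - (k : ℝ)) * t)) =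
      Real.sin (4 * x₀) * ∑ k ∈ 𝒦, ∑ k' ∈ 𝒦,
        if (k : ℝ) + (k' : ℝ) = 4 * ((p : ℝ) / (q : ℝ))
        then A k' * (A k / (2 * ((p : ℝ) / (q : ℝ)) - (k : ℝ)) ^ 2) else 0 := by
  have hphase (k : ℤ) (t : ℝ) :
      2 * (x₀ + (p : ℝ) / q * t) - k * t = 2 * x₀ + (2 * ((p : ℝ) / q) - k) * t := by
    ring
  simp_rw [hphase]
  exact average_two_mul_cos_sum_mul_sin_sum 𝒦 A (fun k => A k / (2 * ((p : ℝ) / q) - k) ^ 2)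
    x₀ p q (by exact_mod_cast (by omega : q ≠ 0))

theorem second_order_average (𝒦 : Finset ℤ) (A : ℤ → ℝ) (p q : ℤ) (hq : 1 ≤ q) (x₀ : ℝ)
    (hres : ∀ k ∈ 𝒦, 2 * ((p : ℝ) / (q : ℝ)) ≠ (k : ℝ)) :
    (1 / (2 * π * q)) * ∫ t in (0:ℝ)..(2 * π * q),
        (∑ k ∈ 𝒦, 2 * A k * Real.cos (2 * (x₀ + ((p : ℝ) / (q : ℝ)) * t) - (k : ℝ) * t)) *
          (∑ k ∈ 𝒦, (A k / (2 * ((p : ℝ) / (q : ℝ)) - (k : ℝ)) ^ 2) *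
            Real.sin (2 * x₀ + (2 * ((p : ℝ) / (q : ℝ)) - (k : ℝ)) * t)) =
      Real.sin (4 * x₀) * ∑ k ∈ 𝒦, ∑ k' ∈ 𝒦,
        if (k : ℝ) + (k' : ℝ) = 4 * ((p : ℝ) / (q : ℝ))
        then A k' * (A k / (2 * ((p : ℝ) / (q : ℝ)) - (k : ℝ)) ^ 2) else 0 :=
  second_order_average_general 𝒦 A p q hq x₀
end

section
/- Structure of derivatives for the spin-orbit ODE: consider ẋ = y, ẏ = −ε(a(t)cos 2x + b(t)sin 2x) − γα(y − ω) with a, b smooth. Then for every i ≥ 1, the i-th derivative y⁽ⁱ⁾(t) is a finite sum of terms of the form ν ε^d p(t) y(t)^k cos(2x(t))^{d−l} sin(2x(t))^l with ν ∈ ℝ, integers k ≥ 0, 0 ≤ l ≤ d, where p(t) is a product of derivatives of a and b and constants; in particular every term containing total trigonometric degree d in cos 2x and sin 2x carries a factor ε^d. -/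
/-- Functions that are finite products of (iterated) derivatives of `a` and `b`
(and the constant function 1). -/
inductive ProdDeriv (a b : ℝ → ℝ) : (ℝ → ℝ) → Prop
  | one : ProdDeriv a b (fun _ => 1)
  | mul_a (n : ℕ) (p : ℝ → ℝ) : ProdDeriv a b p →
      ProdDeriv a b (fun t => p t * iteratedDeriv n a t)
  | mul_b (n : ℕ) (p : ℝ → ℝ) : ProdDeriv a b p →
      ProdDeriv a b (fun t => p t * iteratedDeriv n b t)

section Aux

variable {a b : ℝ → ℝ}

lemma prodDeriv_contDiff (ha : ContDiff ℝ (⊤ : ℕ∞) a) (hb : ContDiff ℝ (⊤ : ℕ∞) b)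
    {p : ℝ → ℝ} (hp : ProdDeriv a b p) : ContDiff ℝ (⊤ : ℕ∞) p := by
  induction hp with
  | one => exact contDiff_const
  | mul_a n q _ ih => exact ih.mul (by rw [iteratedDeriv_eq_iterate]; exact ha.iterate_deriv n)
  | mul_b n q _ ih => exact ih.mul (by rw [iteratedDeriv_eq_iterate]; exact hb.iterate_deriv n)

lemma prodDeriv_deriv (ha : ContDiff ℝ (⊤ : ℕ∞) a) (hb : ContDiff ℝ (⊤ : ℕ∞) b)
    {p : ℝ → ℝ} (hp : ProdDeriv a b p) :
    ∃ (m : ℕ) (q : Fin m → ℝ → ℝ), (∀ j, ProdDeriv a b (q j)) ∧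
      ∀ t, deriv p t = ∑ j, q j t := by
  induction hp with
  | one =>
    exact ⟨0, fun j => j.elim0, fun j => j.elim0, by simp⟩
  | mul_a n q hq ih =>
    obtain ⟨m, r, hr, hd⟩ := ih
    refine ⟨m + 1, Fin.snoc (fun j t => r j t * iteratedDeriv n a t)
      (fun t => q t * iteratedDeriv (n+1) a t), ?_, ?_⟩
    · intro j
      refine Fin.lastCases ?_ (fun j => ?_) j
      · simpa [Fin.snoc] using (ProdDeriv.mul_a (n+1) q hq)
      · simpa [Fin.snoc] using (ProdDeriv.mul_a n (r j) (hr j))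
    · intro t
      have hqd : DifferentiableAt ℝ q t :=
        ((prodDeriv_contDiff ha hb hq).differentiable (by simp)).differentiableAt
      have had : DifferentiableAt ℝ (iteratedDeriv n a) t := by
        rw [iteratedDeriv_eq_iterate]
        exact ((ha.iterate_deriv n).differentiable (by simp)).differentiableAt
      rw [deriv_fun_mul hqd had, Fin.sum_univ_castSucc]
      simp [Fin.snoc, hd t, Finset.sum_mul, ← iteratedDeriv_succ]
  | mul_b n q hq ih =>
    obtain ⟨m, r, hr, hd⟩ := ih
    refine ⟨m + 1, Fin.snoc (fun j t => r j t * iteratedDeriv n b t)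
      (fun t => q t * iteratedDeriv (n+1) b t), ?_, ?_⟩
    · intro j
      refine Fin.lastCases ?_ (fun j => ?_) j
      · simpa [Fin.snoc] using (ProdDeriv.mul_b (n+1) q hq)
      · simpa [Fin.snoc] using (ProdDeriv.mul_b n (r j) (hr j))
    · intro t
      have hqd : DifferentiableAt ℝ q t :=
        ((prodDeriv_contDiff ha hb hq).differentiable (by simp)).differentiableAt
      have hbd : DifferentiableAt ℝ (iteratedDeriv n b) t := by
        rw [iteratedDeriv_eq_iterate]
        exact ((hb.iterate_deriv n).differentiable (by simp)).differentiableAt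
      rw [deriv_fun_mul hqd hbd, Fin.sum_univ_castSucc]
      simp [Fin.snoc, hd t, Finset.sum_mul, ← iteratedDeriv_succ]

end Aux

section Good

variable (ε : ℝ) (a b x y : ℝ → ℝ)

/-- A single term of the canonical shape. -/
noncomputable def Term (p : ℝ → ℝ) (ν : ℝ) (d l k : ℕ) : ℝ → ℝ :=
  fun t => ν * ε ^ d * p t * y t ^ k *
    Real.cos (2 * x t) ^ (d - l) * Real.sin (2 * x t) ^ l

/-- A function with the right structure. -/
def Good (f : ℝ → ℝ) : Prop :=
  ∃ (n : ℕ) (ν : Fin n → ℝ) (d l k : Fin n → ℕ) (p : Fin n → ℝ → ℝ),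
    (∀ j, l j ≤ d j) ∧ (∀ j, ProdDeriv a b (p j)) ∧
    ∀ t, f t = ∑ j, Term ε x y (p j) (ν j) (d j) (l j) (k j) t

variable {ε a b x y}

lemma Good.congr {f g : ℝ → ℝ} (h : ∀ t, f t = g t) (hf : Good ε a b x y f) :
    Good ε a b x y g := by
  obtain ⟨n, ν, d, l, k, p, h1, h2, h3⟩ := hf
  exact ⟨n, ν, d, l, k, p, h1, h2, fun t => (h t) ▸ h3 t⟩

lemma good_zero : Good ε a b x y (fun _ => 0) :=
  ⟨0, fun j => j.elim0, fun j => j.elim0, fun j => j.elim0, fun j => j.elim0,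
    fun j => j.elim0, fun j => j.elim0, fun j => j.elim0, by simp⟩

lemma good_term {p : ℝ → ℝ} (hp : ProdDeriv a b p) {ν : ℝ} {d l k : ℕ} (hld : l ≤ d) :
    Good ε a b x y (Term ε x y p ν d l k) :=
  ⟨1, fun _ => ν, fun _ => d, fun _ => l, fun _ => k, fun _ => p,
    fun _ => hld, fun _ => hp, by simp⟩

lemma Good.add {f g : ℝ → ℝ} (hf : Good ε a b x y f) (hg : Good ε a b x y g) :
    Good ε a b x y (fun t => f t + g t) := by
  obtain ⟨n, ν, d, l, k, p, h1, h2, h3⟩ := hf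
  obtain ⟨n', ν', d', l', k', p', h1', h2', h3'⟩ := hg
  refine ⟨n + n', Fin.addCases ν ν', Fin.addCases d d', Fin.addCases l l',
    Fin.addCases k k', Fin.addCases p p', ?_, ?_, ?_⟩
  · intro j; refine Fin.addCases (fun j => ?_) (fun j => ?_) j <;> simp [h1, h1']
  · intro j; refine Fin.addCases (fun j => ?_) (fun j => ?_) j <;> simp [h2, h2']
  · intro t
    rw [Fin.sum_univ_add]
    simp only [Fin.addCases_left, Fin.addCases_right]
    rw [← h3 t, ← h3' t]

lemma good_sum : ∀ (n : ℕ) (f : Fin n → ℝ → ℝ), (∀ j, Good ε a b x y (f j)) →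
    Good ε a b x y (fun t => ∑ j, f j t)
  | 0, f, _ => good_zero.congr (by simp)
  | n + 1, f, h => by
    have := ((good_sum n (fun j => f j.castSucc) (fun j => h _)).add (h (Fin.last n)))
    exact this.congr (fun t => by rw [Fin.sum_univ_castSucc])

end Good

section Main

variable {ε γ α ω : ℝ} {a b x y : ℝ → ℝ}
variable (ha : ContDiff ℝ (⊤ : ℕ∞) a) (hb : ContDiff ℝ (⊤ : ℕ∞) b)
variable (hx : ContDiff ℝ (⊤ : ℕ∞) x) (hy : ContDiff ℝ (⊤ : ℕ∞) y)
variable (hxy : ∀ t, deriv x t = y t)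
variable (hode : ∀ t, deriv y t =
      -ε * (a t * Real.cos (2 * x t) + b t * Real.sin (2 * x t)) - γ * α * (y t - ω))

include ha hb hx hy hxy hode in
lemma term_deriv_good {p : ℝ → ℝ} (hp : ProdDeriv a b p) (ν : ℝ) {d l k : ℕ} (hld : l ≤ d) :
    Good ε a b x y (deriv (Term ε x y p ν d l k)) := by
  have key : ∀ t, deriv (Term ε x y p ν d l k) t =
      (ν * ε ^ d * deriv p t * y t ^ k *
        Real.cos (2 * x t) ^ (d - l) * Real.sin (2 * x t) ^ l)
      + (ν * ε ^ d * p t * ((k : ℝ) * y t ^ (k - 1) *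
          (-ε * (a t * Real.cos (2 * x t) + b t * Real.sin (2 * x t)) - γ * α * (y t - ω))) *
        Real.cos (2 * x t) ^ (d - l) * Real.sin (2 * x t) ^ l)
      + (ν * ε ^ d * p t * y t ^ k *
        (((d - l : ℕ) : ℝ) * Real.cos (2 * x t) ^ (d - l - 1) *
          (-Real.sin (2 * x t) * (2 * y t))) * Real.sin (2 * x t) ^ l)
      + (ν * ε ^ d * p t * y t ^ k * Real.cos (2 * x t) ^ (d - l) *
        ((l : ℝ) * Real.sin (2 * x t) ^ (l - 1) * (Real.cos (2 * x t) * (2 * y t)))) := by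
    intro t
    have hxt : HasDerivAt x (y t) t := by
      have := ((hx.differentiable (by simp)) t).hasDerivAt
      rwa [hxy t] at this
    have hyt : HasDerivAt y
        (-ε * (a t * Real.cos (2 * x t) + b t * Real.sin (2 * x t)) - γ * α * (y t - ω)) t := by
      have := ((hy.differentiable (by simp)) t).hasDerivAt
      rwa [hode t] at this
    have h2x : HasDerivAt (fun t => 2 * x t) (2 * y t) t := hxt.const_mul 2
    have hC : HasDerivAt (fun t => Real.cos (2 * x t))
        (-Real.sin (2 * x t) * (2 * y t)) t := h2x.cos
    have hS : HasDerivAt (fun t => Real.sin (2 * x t))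
        (Real.cos (2 * x t) * (2 * y t)) t := h2x.sin
    have hpd : HasDerivAt p (deriv p t) t :=
      (((prodDeriv_contDiff ha hb hp).differentiable (by simp)) t).hasDerivAt
    have H := (((hpd.const_mul (ν * ε ^ d)).mul (hyt.pow k)).mul (hC.pow (d - l))).mul
      (hS.pow l)
    have := H.deriv
    change deriv (Term ε x y p ν d l k) t = _ at this
    simp only [Pi.mul_apply, Pi.pow_apply] at this
    exact this.trans (by ring)
  -- Good for each of the four pieces
  have g1 : Good ε a b x y (fun t => ν * ε ^ d * deriv p t * y t ^ k *
      Real.cos (2 * x t) ^ (d - l) * Real.sin (2 * x t) ^ l) := by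
    obtain ⟨m, q, hq, hqd⟩ := prodDeriv_deriv ha hb hp
    refine (good_sum m (fun j => Term ε x y (q j) ν d l k)
      (fun j => good_term (hq j) hld)).congr ?_
    intro t
    simp only [Term]
    rw [hqd t]
    simp only [Finset.mul_sum, Finset.sum_mul]
  have g2 : Good ε a b x y (fun t => ν * ε ^ d * p t * ((k : ℝ) * y t ^ (k - 1) *
      (-ε * (a t * Real.cos (2 * x t) + b t * Real.sin (2 * x t)) - γ * α * (y t - ω))) *
      Real.cos (2 * x t) ^ (d - l) * Real.sin (2 * x t) ^ l) := by
    rcases k with _ | k'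
    · exact good_zero.congr (by intro t; simp)
    · have gA : Good ε a b x y (Term ε x y (fun t => p t * iteratedDeriv 0 a t)
        (-(ν * (k' + 1))) (d + 1) l k') := good_term (hp.mul_a 0) (by omega)
      have gB : Good ε a b x y (Term ε x y (fun t => p t * iteratedDeriv 0 b t)
        (-(ν * (k' + 1))) (d + 1) (l + 1) k') := good_term (hp.mul_b 0) (by omega)
      have gC : Good ε a b x y (Term ε x y p (-(ν * (k' + 1) * γ * α)) d l (k' + 1)) :=
        good_term hp hld
      have gD : Good ε a b x y (Term ε x y p (ν * (k' + 1) * γ * α * ω) d l k') :=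
        good_term hp hld
      refine (((gA.add gB).add gC).add gD).congr ?_
      intro t
      simp only [Term, iteratedDeriv_zero, Nat.add_sub_cancel]
      have e1 : d + 1 - l = (d - l) + 1 := by omega
      have e2 : d + 1 - (l + 1) = d - l := by omega
      rw [e1, e2]
      push_cast
      ring
  have g3 : Good ε a b x y (fun t => ν * ε ^ d * p t * y t ^ k *
      (((d - l : ℕ) : ℝ) * Real.cos (2 * x t) ^ (d - l - 1) *
        (-Real.sin (2 * x t) * (2 * y t))) * Real.sin (2 * x t) ^ l) := by
    rcases hdl : d - l with _ | m'
    · exact good_zero.congr (by intro t; simp)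
    · have g : Good ε a b x y (Term ε x y p (-(2 * ν * (m' + 1))) d (l + 1) (k + 1)) :=
        good_term hp (by omega)
      refine g.congr ?_
      intro t
      simp only [Term]
      have e : d - (l + 1) = m' := by omega
      rw [e]
      simp only [Nat.add_sub_cancel]
      push_cast
      ring
  have g4 : Good ε a b x y (fun t => ν * ε ^ d * p t * y t ^ k *
      Real.cos (2 * x t) ^ (d - l) *
      ((l : ℝ) * Real.sin (2 * x t) ^ (l - 1) * (Real.cos (2 * x t) * (2 * y t)))) := by
    rcases l with _ | l'
    · exact good_zero.congr (by intro t; simp)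
    · have g : Good ε a b x y (Term ε x y p (2 * ν * (l' + 1)) d l' (k + 1)) :=
        good_term hp (by omega)
      refine g.congr ?_
      intro t
      simp only [Term, Nat.add_sub_cancel]
      have e : d - l' = (d - (l' + 1)) + 1 := by omega
      rw [e]
      push_cast
      ring
  exact (((g1.add g2).add g3).add g4).congr (fun t => (key t).symm)

end Main

theorem derivative_structure_spin_orbit
    (ε γ α ω : ℝ) (a b x y : ℝ → ℝ)
    (ha : ContDiff ℝ (⊤ : ℕ∞) a) (hb : ContDiff ℝ (⊤ : ℕ∞) b)
    (hx : ContDiff ℝ (⊤ : ℕ∞) x) (hy : ContDiff ℝ (⊤ : ℕ∞) y)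
    (hxy : ∀ t, deriv x t = y t)
    (hode : ∀ t, deriv y t =
      -ε * (a t * Real.cos (2 * x t) + b t * Real.sin (2 * x t)) - γ * α * (y t - ω)) :
    ∀ i : ℕ, 1 ≤ i →
      ∃ (n : ℕ) (ν : Fin n → ℝ) (d l k : Fin n → ℕ) (p : Fin n → ℝ → ℝ),
        (∀ j, l j ≤ d j) ∧
        (∀ j, ProdDeriv a b (p j)) ∧
        ∀ t : ℝ, iteratedDeriv i y t =
          ∑ j : Fin n, ν j * ε ^ d j * p j t * y t ^ k j *
            Real.cos (2 * x t) ^ (d j - l j) * Real.sin (2 * x t) ^ l j := by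
  have ha' : ContDiff ℝ (⊤ : ℕ∞) a := ha.of_le (by simp)
  have hb' : ContDiff ℝ (⊤ : ℕ∞) b := hb.of_le (by simp)
  have hx' : ContDiff ℝ (⊤ : ℕ∞) x := hx.of_le (by simp)
  have hy' : ContDiff ℝ (⊤ : ℕ∞) y := hy.of_le (by simp)
  have main : ∀ i : ℕ, 1 ≤ i → Good ε a b x y (iteratedDeriv i y) := by
    intro i hi
    induction i with
    | zero => omega
    | succ i ih =>
      rcases Nat.eq_or_lt_of_le hi with h1 | h1
      · -- i + 1 = 1, base case
        have h0 : i = 0 := by omega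
        subst h0
        have gA : Good ε a b x y (Term ε x y (fun t => (1 : ℝ) * iteratedDeriv 0 a t)
            (-1) 1 0 0) := good_term (ProdDeriv.one.mul_a 0) (by omega)
        have gB : Good ε a b x y (Term ε x y (fun t => (1 : ℝ) * iteratedDeriv 0 b t)
            (-1) 1 1 0) := good_term (ProdDeriv.one.mul_b 0) (by omega)
        have gC : Good ε a b x y (Term ε x y (fun _ => (1 : ℝ)) (-(γ * α)) 0 0 1) :=
          good_term ProdDeriv.one (by omega)
        have gD : Good ε a b x y (Term ε x y (fun _ => (1 : ℝ)) (γ * α * ω) 0 0 0) :=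
          good_term ProdDeriv.one (by omega)
        refine (((gA.add gB).add gC).add gD).congr ?_
        intro t
        rw [iteratedDeriv_one, hode t]
        simp only [Term, iteratedDeriv_zero]
        ring
      · -- inductive step, i ≥ 1
        have hi' : 1 ≤ i := by omega
        obtain ⟨n, ν, d, l, k, p, h1, h2, h3⟩ := ih hi'
        have hfun : iteratedDeriv i y =
            fun t => ∑ j, Term ε x y (p j) (ν j) (d j) (l j) (k j) t := funext h3
        rw [iteratedDeriv_succ, hfun]
        have hTd : ∀ (j : Fin n) (t : ℝ),
            DifferentiableAt ℝ (Term ε x y (p j) (ν j) (d j) (l j) (k j)) t := by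
          intro j t
          have hps := (prodDeriv_contDiff ha' hb' (h2 j)).differentiable (by simp)
          have hyd := hy'.differentiable (by simp)
          have hxd := hx'.differentiable (by simp)
          exact ((((hps t).const_mul (ν j * ε ^ d j)).mul ((hyd t).pow (k j))).mul
            (((hxd t).const_mul 2).cos.pow (d j - l j))).mul
            (((hxd t).const_mul 2).sin.pow (l j))
        have hds : ∀ t, deriv (fun t => ∑ j, Term ε x y (p j) (ν j) (d j) (l j) (k j) t) t =
            ∑ j, deriv (Term ε x y (p j) (ν j) (d j) (l j) (k j)) t := by
          intro t
          exact deriv_fun_sum (fun j _ => hTd j t)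
        exact (good_sum n _ (fun j => term_deriv_good ha' hb' hx' hy' hxy hode (h2 j)
          (ν j) (h1 j))).congr (fun t => (hds t).symm)
  intro i hi
  obtain ⟨n, ν, d, l, k, p, h1, h2, h3⟩ := main i hi
  exact ⟨n, ν, d, l, k, p, h1, h2, fun t => by rw [h3 t]; rfl⟩
end
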